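/- arXiv:math/0212294 — 5 statements merged into one kernel-verified Lean document; each statement's English description precedes it below -/
import Mathlib

section
/- Let V be a complete subsemimodule of a complete right K-semimodule X, with generating family W (every v ∈ V is a supremum of elements wλ_w with w ∈ W, λ_w ∈ K). Then the canonical projector P_V(x) = max{v ∈ V : v ≤ x} satisfies P_V(x) = ⊔_{w∈W} w·(w\x). -/
variable {K : Type*} [CompleteLattice K] [Monoid K]
variable {X : Type*} [CompleteLattice X]

/-- Residual of the action: x\y = ⊔ {l : K | x·l ≤ y}. -/
def lres (act : X → K → X) (x y : X) : K := sSup {l : K | act x l ≤ y}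

/-- Canonical projector onto a sup-closed subset V: P_V(x) = ⊔ {v ∈ V | v ≤ x}. -/
def proj (V : Set X) (x : X) : X := sSup {v : X | v ∈ V ∧ v ≤ x}

/-!
Since `λ ↦ w·λ` preserves suprema, it is residuated with residual `w\·`, so `w·(w\x)` is the
largest multiple of `w` below `x`. Each such multiple of a generator lies in `V` below `x`,
hence below `P_V(x)`. Conversely `P_V(x) ∈ V` is a supremum of terms `w·λ_w`, each below `x`,
so `λ_w ≤ w\x` and `w·λ_w ≤ w·(w\x)`.
-/

theorem monotone_of_map_sSup {α β : Type*} [CompleteLattice α] [CompleteLattice β] {f : α → β}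
    (hf : ∀ S : Set α, f (sSup S) = ⨆ a ∈ S, f a) : Monotone f := by
  intro a b hab
  calc f a ≤ ⨆ c ∈ ({a, b} : Set α), f c := le_biSup f (Set.mem_insert a {b})
    _ = f (sSup {a, b}) := (hf _).symm
    _ = f b := by rw [sSup_pair, sup_eq_right.mpr hab]

theorem gc_act_lres {α β : Type*} [CompleteLattice α] [CompleteLattice β] {act : β → α → β} {w : β}
    (hsup : ∀ S : Set α, act w (sSup S) = ⨆ a ∈ S, act w a) :
    GaloisConnection (act w) (lres act w) := by
  intro l x
  refine ⟨fun h => le_sSup h, fun h => ?_⟩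
  calc act w l ≤ act w (lres act w x) := monotone_of_map_sSup hsup h
    _ = ⨆ a ∈ {a | act w a ≤ x}, act w a := hsup _
    _ ≤ x := iSup₂_le fun _ ha => ha

theorem proj_le (V : Set X) (x : X) : proj V x ≤ x :=
  sSup_le fun _ hv => hv.2

theorem le_proj {V : Set X} {v x : X} (hv : v ∈ V) (hvx : v ≤ x) : v ≤ proj V x :=
  le_sSup ⟨hv, hvx⟩

theorem proj_mem {V : Set X} (hVsup : ∀ U : Set X, U ⊆ V → sSup U ∈ V) (x : X) : proj V x ∈ V :=
  hVsup _ fun _ hv => hv.1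

theorem projector_formula_general
    (act : X → K → X)
    (hsupS : ∀ (x : X) (S : Set K), act x (sSup S) = ⨆ a ∈ S, act x a)
    (V : Set X)
    (hVsup : ∀ U : Set X, U ⊆ V → sSup U ∈ V)
    (hVact : ∀ v ∈ V, ∀ a : K, act v a ∈ V)
    (W : Set X) (hWV : W ⊆ V)
    (hgen : ∀ v ∈ V, ∃ lam : X → K, v = ⨆ w ∈ W, act w (lam w))
    (x : X) :
    proj V x = ⨆ w ∈ W, act w (lres act w x) := by
  apply le_antisymm
  · obtain ⟨lam, hlam⟩ := hgen _ (proj_mem hVsup x)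
    rw [hlam]
    refine iSup₂_le fun w hw => ?_
    have hgc := gc_act_lres (hsupS w)
    have hle : act w (lam w) ≤ x :=
      calc act w (lam w) ≤ ⨆ w ∈ W, act w (lam w) := le_biSup (fun w => act w (lam w)) hw
        _ = proj V x := hlam.symm
        _ ≤ x := proj_le V x
    calc act w (lam w) ≤ act w (lres act w x) := hgc.monotone_l (hgc.le_u hle)
      _ ≤ ⨆ w ∈ W, act w (lres act w x) := le_biSup (fun w => act w (lres act w x)) hw
  · exact iSup₂_le fun w hw =>
      le_proj (hVact w (hWV hw) _) ((gc_act_lres (hsupS w)).l_u_le x)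

/-- Projector formula: if W generates the complete subsemimodule V, then
P_V(x) = ⊔_{w ∈ W} w·(w\x). -/
theorem projector_formula
    (act : X → K → X)
    (hKl : ∀ (a : K) (S : Set K), a * sSup S = ⨆ b ∈ S, a * b)
    (hKr : ∀ (a : K) (S : Set K), sSup S * a = ⨆ b ∈ S, b * a)
    (hassoc : ∀ (x : X) (a b : K), act (act x a) b = act x (a * b))
    (hone : ∀ x : X, act x 1 = x)
    (hsupS : ∀ (x : X) (S : Set K), act x (sSup S) = ⨆ a ∈ S, act x a)
    (hsupV : ∀ (U : Set X) (a : K), act (sSup U) a = ⨆ x ∈ U, act x a)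
    (V : Set X)
    (hVsup : ∀ U : Set X, U ⊆ V → sSup U ∈ V)
    (hVact : ∀ v ∈ V, ∀ a : K, act v a ∈ V)
    (W : Set X) (hWV : W ⊆ V)
    (hgen : ∀ v ∈ V, ∃ lam : X → K, v = ⨆ w ∈ W, act w (lam w))
    (x : X) :
    proj V x = ⨆ w ∈ W, act w (lres act w x) :=
  projector_formula_general act hsupS V hVsup hVact W hWV hgen x
end

section
/- Let V be a complete subsemimodule of a complete right K-semimodule X with generating family W. Then P_V(x) = ⊓{z ∈ X : w\z ≥ w\x for all w ∈ W}, and this infimum is attained (it is the bottom element of that set). -/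
/-! Because `λ ↦ wλ` preserves joins, it is left adjoint to `w\·`. Hence `w\x ≤ w\z` says
`w(w\x) ≤ z`, and `w(w\x)`, the largest multiple of `w` below `x`, lies in `V` and so below
`P_V(x)`. Conversely every `v ∈ V` below `x` is a join of multiples `wλ_w` with
`λ_w ≤ w\x ≤ w\z`, hence lies below `z`. -/

variable {K : Type*} [CompleteLattice K] [Monoid K]
variable {X : Type*} [CompleteLattice X]

section Residual

variable {R M : Type*} [CompleteLattice R] [CompleteLattice M] {act : M → R → M} {w : M}

theorem monotone_of_map_sSup_s10 (h : ∀ s : Set R, act w (sSup s) = ⨆ a ∈ s, act w a) :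
    Monotone (act w) := fun a b hab =>
  calc act w a ≤ ⨆ c ∈ ({a, b} : Set R), act w c := le_biSup (act w) (by simp)
    _ = act w b := by rw [← h, sSup_pair, sup_eq_right.2 hab]

theorem gc_lres (h : ∀ s : Set R, act w (sSup s) = ⨆ a ∈ s, act w a) :
    GaloisConnection (act w) (lres act w) := fun a z =>
  ⟨fun ha => le_sSup ha, fun ha =>
    calc act w a ≤ act w (lres act w z) := monotone_of_map_sSup_s10 h ha
      _ ≤ z := by rw [lres, h]; exact iSup₂_le fun _ hl => hl⟩

end Residual

theorem projector_dual_characterization_general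
    (act : X → K → X)
    (hsupS : ∀ (x : X) (S : Set K), act x (sSup S) = ⨆ a ∈ S, act x a)
    (V : Set X)
    (hVact : ∀ v ∈ V, ∀ a : K, act v a ∈ V)
    (W : Set X) (hWV : W ⊆ V)
    (hgen : ∀ v ∈ V, ∃ lam : X → K, v = ⨆ w ∈ W, act w (lam w))
    (x : X) :
    IsLeast {z : X | ∀ w ∈ W, lres act w x ≤ lres act w z} (proj V x) := by
  have hgc (w : X) : GaloisConnection (act w) (lres act w) := gc_lres (hsupS w)
  refine ⟨fun w hw => (hgc w).le_u (le_sSup ⟨hVact w (hWV hw) _, (hgc w).l_u_le x⟩), ?_⟩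
  intro z hz
  refine sSup_le fun v ⟨hvV, hvx⟩ => ?_
  obtain ⟨lam, rfl⟩ := hgen v hvV
  refine iSup₂_le fun w hw => (hgc w).l_le ?_
  have hlam : act w (lam w) ≤ x := (le_biSup (fun w => act w (lam w)) hw).trans hvx
  exact ((hgc w).le_u hlam).trans (hz w hw)

/-- Dual characterization of the projector: P_V(x) is the least element of
{z : w\z ≥ w\x for all w ∈ W}. -/
theorem projector_dual_characterization
    (act : X → K → X)
    (hKl : ∀ (a : K) (S : Set K), a * sSup S = ⨆ b ∈ S, a * b)
    (hKr : ∀ (a : K) (S : Set K), sSup S * a = ⨆ b ∈ S, b * a)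
    (hassoc : ∀ (x : X) (a b : K), act (act x a) b = act x (a * b))
    (hone : ∀ x : X, act x 1 = x)
    (hsupS : ∀ (x : X) (S : Set K), act x (sSup S) = ⨆ a ∈ S, act x a)
    (hsupV : ∀ (U : Set X) (a : K), act (sSup U) a = ⨆ x ∈ U, act x a)
    (V : Set X)
    (hVsup : ∀ U : Set X, U ⊆ V → sSup U ∈ V)
    (hVact : ∀ v ∈ V, ∀ a : K, act v a ∈ V)
    (W : Set X) (hWV : W ⊆ V)
    (hgen : ∀ v ∈ V, ∃ lam : X → K, v = ⨆ w ∈ W, act w (lam w))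
    (x : X) :
    IsLeast {z : X | ∀ w ∈ W, lres act w x ≤ lres act w z} (proj V x) :=
  projector_dual_characterization_general act hsupS V hVact W hWV hgen x
end

section
/- (Universal Separation Theorem, part 1) Let V be a complete subsemimodule of a complete right K-semimodule X and x ∈ X. Then for all v ∈ V, v\P_V(x) = v\x. -/
variable {K : Type*} [CompleteLattice K] [Monoid K]
variable {X : Type*} [CompleteLattice X]

theorem le_proj_iff {V : Set X} {x u : X} (hu : u ∈ V) : u ≤ proj V x ↔ u ≤ x :=
  ⟨fun h => h.trans (proj_le V x), fun h => le_sSup ⟨hu, h⟩⟩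

theorem universal_separation_orth_general
    (act : X → K → X)
    (V : Set X)
    (hVact : ∀ v ∈ V, ∀ a : K, act v a ∈ V)
    (x : X) :
    ∀ v ∈ V, lres act v (proj V x) = lres act v x :=
  fun v hv => congrArg sSup (Set.ext fun l => le_proj_iff (hVact v hv l))

/-- Universal Separation Theorem, part 1: v\P_V(x) = v\x for every v ∈ V. -/
theorem universal_separation_orth
    (act : X → K → X)
    (hKl : ∀ (a : K) (S : Set K), a * sSup S = ⨆ b ∈ S, a * b)
    (hKr : ∀ (a : K) (S : Set K), sSup S * a = ⨆ b ∈ S, b * a)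
    (hassoc : ∀ (x : X) (a b : K), act (act x a) b = act x (a * b))
    (hone : ∀ x : X, act x 1 = x)
    (hsupS : ∀ (x : X) (S : Set K), act x (sSup S) = ⨆ a ∈ S, act x a)
    (hsupV : ∀ (U : Set X) (a : K), act (sSup U) a = ⨆ x ∈ U, act x a)
    (V : Set X)
    (hVsup : ∀ U : Set X, U ⊆ V → sSup U ∈ V)
    (hVact : ∀ v ∈ V, ∀ a : K, act v a ∈ V)
    (x : X) :
    ∀ v ∈ V, lres act v (proj V x) = lres act v x :=
  universal_separation_orth_general act V hVact x
end

section
/- (Definiteness of the generalized Hilbert metric) In a complete right K-semimodule X over a complete idempotent semiring K, if d_H(x,y) = (x\y)(y\x) equals the unit e of K, then x = y·λ for some λ ∈ K (indeed x = y·(y\x)). -/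
/-!
If `(x\y)(y\x) = e`, then `x = x·e = (x·(x\y))·(y\x) ≤ y·(y\x)`, because `x·(x\y) ≤ y` and
the action is monotone; the reverse inequality `y·(y\x) ≤ x` holds for any residual.
-/

variable {K : Type*} [CompleteLattice K] [Monoid K]
variable {X : Type*} [CompleteLattice X]

theorem act_mono_left {M Y : Type*} [CompleteLattice Y] {act : Y → M → Y}
    (hsupV : ∀ (U : Set Y) (a : M), act (sSup U) a = ⨆ x ∈ U, act x a)
    (a : M) : Monotone fun u => act u a := by
  intro u v huv
  have hpair := hsupV {u, v} a
  rw [sSup_pair, sup_eq_right.mpr huv] at hpair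
  simp only [hpair]
  exact le_iSup₂ (f := fun z _ => act z a) u (Set.mem_insert u {v})

theorem act_lres_le {act : X → K → X}
    (hsupS : ∀ (x : X) (S : Set K), act x (sSup S) = ⨆ a ∈ S, act x a)
    (x y : X) : act x (lres act x y) ≤ y := by
  rw [lres, hsupS]
  exact iSup₂_le fun _ hl => hl

theorem hilbert_definite_general
    (act : X → K → X)
    (hassoc : ∀ (x : X) (a b : K), act (act x a) b = act x (a * b))
    (hone : ∀ x : X, act x 1 = x)
    (hsupS : ∀ (x : X) (S : Set K), act x (sSup S) = ⨆ a ∈ S, act x a)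
    (hsupV : ∀ (U : Set X) (a : K), act (sSup U) a = ⨆ x ∈ U, act x a)
    (x y : X)
    (h : lres act x y * lres act y x = 1) :
    x = act y (lres act y x) := by
  refine le_antisymm ?_ (act_lres_le hsupS y x)
  calc x = act x (lres act x y * lres act y x) := by rw [h, hone]
    _ = act (act x (lres act x y)) (lres act y x) := (hassoc _ _ _).symm
    _ ≤ act y (lres act y x) := act_mono_left hsupV _ (act_lres_le hsupS x y)

/-- Definiteness of the generalized Hilbert metric: if d_H(x,y) = e then
x = y·(y\x). -/
theorem hilbert_definite
    (act : X → K → X)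
    (hKl : ∀ (a : K) (S : Set K), a * sSup S = ⨆ b ∈ S, a * b)
    (hKr : ∀ (a : K) (S : Set K), sSup S * a = ⨆ b ∈ S, b * a)
    (hassoc : ∀ (x : X) (a b : K), act (act x a) b = act x (a * b))
    (hone : ∀ x : X, act x 1 = x)
    (hsupS : ∀ (x : X) (S : Set K), act x (sSup S) = ⨆ a ∈ S, act x a)
    (hsupV : ∀ (U : Set X) (a : K), act (sSup U) a = ⨆ x ∈ U, act x a)
    (x y : X)
    (h : lres act x y * lres act y x = 1) :
    x = act y (lres act y x) :=
  hilbert_definite_general act hassoc hone hsupS hsupV x y h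
end

section
/- (Reflexivity of complete idempotent semifields) Let K be a complete idempotent semiring in which every element other than the bottom ε and the top ⊤ is multiplicatively invertible, and K ≠ {ε, e}. Fix any invertible φ ∈ K and define x♭ = max{y : yx ≤ φ} and x♯ = max{y : xy ≤ φ}. Then (x♭)♯ = x and (x♯)♭ = x for all x ∈ K. -/
/-!
Regard `K` as a unital quantale, so that `x♭ = x ⇨ₗ φ` and `x♯ = x ⇨ᵣ φ`. For a unit `u` the
residuals are `u ⇨ₗ φ = φ u⁻¹` and `u ⇨ᵣ φ = u⁻¹ φ`, so for units both round trips return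
`u φ⁻¹ φ = u`. The only non-units are `⊥` and `⊤`: always `⊥ ⇨ φ = ⊤`, and since `⊤` absorbs every
nonzero element, `⊤ ⇨ φ = ⊥` as soon as `φ ≠ ⊤`. This is where `K ≠ {ε, e}` enters: if `⊤` had an
inverse `t`, every `x ≠ ⊥` would be `t ⊤ x = t ⊤ = 1`.
-/

namespace Quantale

variable {K : Type*} [Monoid K] [CompleteLattice K] [IsQuantale K]

theorem units_leftMulResiduation (u : Kˣ) (φ : K) : (u : K) ⇨ₗ φ = φ * ↑u⁻¹ :=
  eq_of_forall_le_iff fun z => by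
    rw [leftMulResiduation_le_iff_mul_le, Units.le_mul_inv_iff]

theorem units_rightMulResiduation (u : Kˣ) (φ : K) : (u : K) ⇨ᵣ φ = ↑u⁻¹ * φ :=
  eq_of_forall_le_iff fun z => by
    rw [rightMulResiduation_le_iff_mul_le, Units.le_inv_mul_iff]

theorem bot_leftMulResiduation (φ : K) : ⊥ ⇨ₗ φ = ⊤ :=
  top_le_iff.mp <| leftMulResiduation_le_iff_mul_le.mpr <| by simp

theorem bot_rightMulResiduation (φ : K) : ⊥ ⇨ᵣ φ = ⊤ :=
  top_le_iff.mp <| rightMulResiduation_le_iff_mul_le.mpr <| by simp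

theorem top_mul_top : (⊤ : K) * ⊤ = ⊤ :=
  top_le_iff.mp <| calc
    (⊤ : K) = 1 * ⊤ := (one_mul _).symm
    _ ≤ ⊤ * ⊤ := by gcongr; exact le_top

theorem top_mul_units (u : Kˣ) : (⊤ : K) * u = ⊤ :=
  top_le_iff.mp <| (Units.mul_inv_le_iff u).mp le_top

theorem units_mul_top (u : Kˣ) : (u : K) * ⊤ = ⊤ :=
  top_le_iff.mp <| (Units.inv_mul_le_iff u).mp le_top

variable (hinv : ∀ x : K, x ≠ ⊥ → x ≠ ⊤ → IsUnit x)
include hinv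

theorem top_mul_of_ne_bot {y : K} (hy : y ≠ ⊥) : ⊤ * y = ⊤ := by
  by_cases hyt : y = ⊤
  · rw [hyt, top_mul_top]
  · obtain ⟨u, rfl⟩ := hinv y hy hyt
    exact top_mul_units u

theorem mul_top_of_ne_bot {y : K} (hy : y ≠ ⊥) : y * ⊤ = ⊤ := by
  by_cases hyt : y = ⊤
  · rw [hyt, top_mul_top]
  · obtain ⟨u, rfl⟩ := hinv y hy hyt
    exact units_mul_top u

theorem top_leftMulResiduation {φ : K} (hφ : φ ≠ ⊤) : ⊤ ⇨ₗ φ = ⊥ :=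
  sSup_eq_bot.mpr fun y (hy : y * ⊤ ≤ φ) => by
    by_contra hyb
    exact hφ (top_le_iff.mp (mul_top_of_ne_bot hinv hyb ▸ hy))

theorem top_rightMulResiduation {φ : K} (hφ : φ ≠ ⊤) : ⊤ ⇨ᵣ φ = ⊥ :=
  sSup_eq_bot.mpr fun y (hy : ⊤ * y ≤ φ) => by
    by_contra hyb
    exact hφ (top_le_iff.mp (top_mul_of_ne_bot hinv hyb ▸ hy))

theorem not_isUnit_top (hne : ∃ x : K, x ≠ ⊥ ∧ x ≠ 1) : ¬IsUnit (⊤ : K) := by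
  rintro ⟨t, ht⟩
  obtain ⟨x, hxb, hx1⟩ := hne
  apply hx1
  calc x = ↑t⁻¹ * (⊤ * x) := by rw [← ht, Units.inv_mul_cancel_left]
    _ = 1 := by rw [top_mul_of_ne_bot hinv hxb, ← ht, Units.inv_mul]

theorem rightMulResiduation_leftMulResiduation (hne : ∃ x : K, x ≠ ⊥ ∧ x ≠ 1) (φ : Kˣ)
    (x : K) : (x ⇨ₗ φ) ⇨ᵣ φ = x := by
  have hφ : (φ : K) ≠ ⊤ := fun h => not_isUnit_top hinv hne (h ▸ φ.isUnit)
  by_cases hxb : x = ⊥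
  · rw [hxb, bot_leftMulResiduation, top_rightMulResiduation hinv hφ]
  by_cases hxt : x = ⊤
  · rw [hxt, top_leftMulResiduation hinv hφ, bot_rightMulResiduation]
  obtain ⟨u, rfl⟩ := hinv x hxb hxt
  rw [units_leftMulResiduation, ← Units.val_mul, units_rightMulResiduation]
  simp

theorem leftMulResiduation_rightMulResiduation (hne : ∃ x : K, x ≠ ⊥ ∧ x ≠ 1) (φ : Kˣ)
    (x : K) : (x ⇨ᵣ φ) ⇨ₗ φ = x := by
  have hφ : (φ : K) ≠ ⊤ := fun h => not_isUnit_top hinv hne (h ▸ φ.isUnit)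
  by_cases hxb : x = ⊥
  · rw [hxb, bot_rightMulResiduation, top_leftMulResiduation hinv hφ]
  by_cases hxt : x = ⊤
  · rw [hxt, top_rightMulResiduation hinv hφ, bot_leftMulResiduation]
  obtain ⟨u, rfl⟩ := hinv x hxb hxt
  rw [units_rightMulResiduation, ← Units.val_mul, units_leftMulResiduation]
  simp

end Quantale

open Quantale in
/-- A complete idempotent semifield (every element other than ⊥ and ⊤ is
invertible, and K ≠ {ε, e}) is reflexive: for any invertible φ, the
conjugations x♭ = ⊔{y | y*x ≤ φ} and x♯ = ⊔{y | x*y ≤ φ} are mutually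
inverse, i.e. (x♭)♯ = x and (x♯)♭ = x for all x. -/
theorem complete_semifield_reflexive
    {K : Type*} [CompleteLattice K] [Monoid K]
    (hKl : ∀ (a : K) (S : Set K), a * sSup S = ⨆ b ∈ S, a * b)
    (hKr : ∀ (a : K) (S : Set K), sSup S * a = ⨆ b ∈ S, b * a)
    (hinv : ∀ x : K, x ≠ ⊥ → x ≠ ⊤ → ∃ y : K, x * y = 1 ∧ y * x = 1)
    (hne : ∃ x : K, x ≠ ⊥ ∧ x ≠ 1)
    (φ : K) (hφ : ∃ ψ : K, φ * ψ = 1 ∧ ψ * φ = 1) :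
    ∀ x : K,
      sSup {y : K | sSup {z : K | z * x ≤ φ} * y ≤ φ} = x ∧
      sSup {y : K | y * sSup {z : K | x * z ≤ φ} ≤ φ} = x := by
  have : IsQuantale K := ⟨hKl, fun S a => hKr a S⟩
  have hunit : ∀ x : K, x ≠ ⊥ → x ≠ ⊤ → IsUnit x :=
    fun x hxb hxt => isUnit_iff_exists.mpr (hinv x hxb hxt)
  obtain ⟨φ, rfl⟩ := isUnit_iff_exists.mpr hφ
  exact fun x => ⟨rightMulResiduation_leftMulResiduation hunit hne φ x,
    leftMulResiduation_rightMulResiduation hunit hne φ x⟩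
end
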